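/- arXiv:1802.02073 — 5 statements merged into one kernel-verified Lean document; each statement's English description precedes it below -/
import Mathlib

section
/- Let 𝒪 be a C*-algebra with a strongly continuous one-parameter group of *-automorphisms τ with generator δ, and let V ∈ 𝒪 be self-adjoint with V ∈ Dom(δⁿ). Let τ_V be the perturbed dynamics generated by δ_V = δ + i[V,·]. Then V − τ_V^t(V) ∈ Dom(δⁿ) for all t and sup_{t∈ℝ} ‖δⁿ(V − τ_V^t(V))‖ < ∞. -/
/-!
Let `Γ` be the Dyson series solving `Γ' = Γ · i τ_t(V)`, `Γ 0 = 1`. As `i τ_t(V)` is bounded and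
skew-adjoint, Grönwall's inequality shows `Γ_t⋆ Γ_t = 1` and the cocycle identity
`τ_u(Γ_t) = Γ_u⋆ Γ_{u+t}`. For `a ∈ Dom δ`, the map `s ↦ τV_{t-s}(Γ_s τ_s(a) Γ_s⋆)` has zero
derivative, so `τV_t(a) = Γ_t τ_t(a) Γ_t⋆` and therefore
`τ_u(V - τV_t(V)) = τ_u(V) - Γ_u⋆ Γ_{u+t} τ_{u+t}(V) Γ_{u+t}⋆ Γ_u`.
The derivatives of `u ↦ τ_u(V)` of order `≤ n` have norms independent of `u`; through the ODE
the same holds for `Γ`, and Leibniz' rule then bounds the right-hand side uniformly in `t`.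
-/

open Filter Topology MeasureTheory

namespace PerturbedDynamics

section Gronwall

variable {E : Type*} [NormedAddCommGroup E] [NormedSpace ℝ E]

theorem eq_zero_of_hasDerivAt_of_norm_le {Y F : ℝ → E} {K : ℝ}
    (hY : ∀ t, HasDerivAt Y (F t) t) (hF : ∀ t, ‖F t‖ ≤ K * ‖Y t‖) (h0 : Y 0 = 0)
    (t : ℝ) : Y t = 0 := by
  have forward : ∀ (Z G : ℝ → E), (∀ s, HasDerivAt Z (G s) s) → (∀ s, ‖G s‖ ≤ K * ‖Z s‖) →
      Z 0 = 0 → ∀ u, 0 ≤ u → Z u = 0 := by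
    intro Z G hZ hG hZ0 u hu
    have h := norm_le_gronwallBound_of_norm_deriv_right_le (δ := 0) (ε := 0)
      (fun x _ => (hZ x).continuousAt.continuousWithinAt) (fun x _ => (hZ x).hasDerivWithinAt)
      (by simp [hZ0]) (fun x _ => by simpa using hG x) u ⟨hu, le_rfl⟩
    rwa [gronwallBound_ε0_δ0, norm_le_zero_iff] at h
  rcases le_total 0 t with ht | ht
  · exact forward Y F hY hF h0 t ht
  · simpa using forward (fun s => Y (-s)) (fun s => -F (-s))
      (fun s => ((hY (-s)).scomp s (hasDerivAt_neg s)).congr_deriv (by simp))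
      (fun s => by simpa using hF (-s)) (by simp [h0]) (-t) (by linarith)

end Gronwall

section Dyson

variable {A : Type*} [NormedRing A] [NormedAlgebra ℝ A]

noncomputable def dysonTerm (b : ℝ → A) : ℕ → ℝ → A
  | 0 => fun _ => 1
  | m + 1 => fun t => ∫ s in (0 : ℝ)..t, dysonTerm b m s * b s

noncomputable def dysonSeries (b : ℝ → A) (t : ℝ) : A := ∑' m, dysonTerm b m t

variable {b : ℝ → A}

theorem dysonTerm_succ_zero (m : ℕ) : dysonTerm b (m + 1) 0 = 0 :=
  intervalIntegral.integral_same

theorem dysonSeries_zero : dysonSeries b 0 = 1 := by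
  rw [dysonSeries, tsum_eq_single 0 fun m hm => ?_]
  · rfl
  · obtain ⟨k, rfl⟩ := Nat.exists_eq_succ_of_ne_zero hm
    exact dysonTerm_succ_zero k

theorem continuous_dysonTerm (hb : Continuous b) (m : ℕ) : Continuous (dysonTerm b m) := by
  induction m with
  | zero => exact continuous_const
  | succ m ih =>
    exact intervalIntegral.continuous_primitive (fun _ _ => (ih.mul hb).intervalIntegrable _ _) 0

theorem hasDerivAt_dysonTerm_succ [CompleteSpace A] (hb : Continuous b) (m : ℕ) (t : ℝ) :
    HasDerivAt (dysonTerm b (m + 1)) (dysonTerm b m t * b t) t :=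
  ((continuous_dysonTerm hb m).mul hb).integral_hasStrictDerivAt 0 t |>.hasDerivAt

theorem norm_dysonTerm_le {M : ℝ} (hM : ∀ s, ‖b s‖ ≤ M) (m : ℕ) (t : ℝ) :
    ‖dysonTerm b m t‖ ≤ ‖(1 : A)‖ * ((M * |t|) ^ m / m.factorial) := by
  have hM0 : 0 ≤ M := (norm_nonneg _).trans (hM 0)
  induction m generalizing t with
  | zero => simp [dysonTerm]
  | succ m ih =>
    have hpt : ∀ s,
        ‖dysonTerm b m s * b s‖ ≤ ‖(1 : A)‖ * M ^ (m + 1) / m.factorial * |s - 0| ^ m :=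
      fun s => calc
        ‖dysonTerm b m s * b s‖ ≤ ‖dysonTerm b m s‖ * ‖b s‖ := norm_mul_le _ _
        _ ≤ ‖(1 : A)‖ * ((M * |s|) ^ m / m.factorial) * M :=
          mul_le_mul (ih s) (hM s) (norm_nonneg _) (by positivity)
        _ = _ := by rw [sub_zero]; ring
    calc ‖dysonTerm b (m + 1) t‖
        ≤ |∫ s in (0 : ℝ)..t, ‖(1 : A)‖ * M ^ (m + 1) / m.factorial * |s - 0| ^ m| :=
          intervalIntegral.norm_integral_le_abs_of_norm_le (ae_of_all _ hpt)
            (by apply Continuous.intervalIntegrable; fun_prop)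
      _ = ‖(1 : A)‖ * M ^ (m + 1) / m.factorial * (|t| ^ (m + 1) / (m + 1)) := by
          rw [intervalIntegral.integral_const_mul, abs_mul, abs_of_nonneg (by positivity),
            intervalIntegral.abs_intervalIntegral_eq, ← Real.norm_eq_abs,
            Real.norm_of_nonneg (integral_nonneg fun _ => by positivity),
            integral_pow_abs_sub_uIoc, sub_zero]
      _ = _ := by
          rw [Nat.factorial_succ]; push_cast; field_simp; ring

theorem summable_dysonTerm [CompleteSpace A] {M : ℝ} (hM : ∀ s, ‖b s‖ ≤ M) (t : ℝ) :
    Summable fun m => dysonTerm b m t :=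
  .of_norm_bounded ((Real.summable_pow_div_factorial (M * |t|)).mul_left ‖(1 : A)‖)
    fun m => norm_dysonTerm_le hM m t

theorem hasDerivAt_dysonSeries [CompleteSpace A] {M : ℝ} (hb : Continuous b)
    (hM : ∀ s, ‖b s‖ ≤ M) (t : ℝ) :
    HasDerivAt (dysonSeries b) (dysonSeries b t * b t) t := by
  have hM0 : 0 ≤ M := (norm_nonneg _).trans (hM 0)
  set R := |t| + 1
  have hderiv_le : ∀ m, ∀ s ∈ Set.Ioo (-R) R,
      ‖dysonTerm b m s * b s‖ ≤ ‖(1 : A)‖ * ((M * R) ^ m / m.factorial) * M := fun m s hs => by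
    refine (norm_mul_le _ _).trans (mul_le_mul ?_ (hM s) (norm_nonneg _) (by positivity))
    refine (norm_dysonTerm_le hM m s).trans ?_
    gcongr
    exact abs_le.2 ⟨hs.1.le, hs.2.le⟩
  have htail := hasDerivAt_tsum_of_isPreconnected
    (((Real.summable_pow_div_factorial (M * R)).mul_left ‖(1 : A)‖).mul_right M)
    isOpen_Ioo isPreconnected_Ioo (fun m s _ => hasDerivAt_dysonTerm_succ hb m s) hderiv_le
    (t := Set.Ioo (-R) R) (y₀ := 0) (by constructor <;> linarith [abs_nonneg t])
    (by simp [dysonTerm_succ_zero])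
    (y := t) ⟨by linarith [neg_abs_le t], by linarith [le_abs_self t]⟩
  have hseries : dysonSeries b = fun z => 1 + ∑' m, dysonTerm b (m + 1) z :=
    funext fun z => (summable_dysonTerm hM z).tsum_eq_zero_add
  have h := htail.const_add 1
  rwa [← hseries, (summable_dysonTerm hM t).tsum_mul_right] at h

end Dyson

section IteratedDerivBounds

variable {E F : Type*} [NormedAddCommGroup E] [NormedSpace ℝ E]
  [NormedAddCommGroup F] [NormedSpace ℝ F]

def IteratedDerivBddBy (n : ℕ) (C : ℝ) (f : ℝ → E) : Prop :=
  ContDiff ℝ n f ∧ ∀ k ≤ n, ∀ x, ‖iteratedDeriv k f x‖ ≤ C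

theorem norm_iteratedDeriv_linearIsometryEquiv_comp (L : E ≃ₗᵢ[ℝ] F) (f : ℝ → E) (k : ℕ)
    (x : ℝ) : ‖iteratedDeriv k (L ∘ f) x‖ = ‖iteratedDeriv k f x‖ := by
  rw [← norm_iteratedFDeriv_eq_norm_iteratedDeriv, L.norm_iteratedFDeriv_comp_left,
    norm_iteratedFDeriv_eq_norm_iteratedDeriv]

theorem iteratedDerivBddBy_zero {C : ℝ} {f : ℝ → E} (hf : Continuous f) (hC : ∀ x, ‖f x‖ ≤ C) :
    IteratedDerivBddBy 0 C f :=
  ⟨contDiff_zero.2 hf, fun k hk x => by rw [Nat.le_zero.1 hk, iteratedDeriv_zero]; exact hC x⟩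

namespace IteratedDerivBddBy

variable {n : ℕ} {C D : ℝ} {f g : ℝ → E}

theorem nonneg (h : IteratedDerivBddBy n C f) : 0 ≤ C :=
  (norm_nonneg _).trans (h.2 0 n.zero_le 0)

theorem mono (h : IteratedDerivBddBy n C f) (hCD : C ≤ D) : IteratedDerivBddBy n D f :=
  ⟨h.1, fun k hk x => (h.2 k hk x).trans hCD⟩

theorem of_le (h : IteratedDerivBddBy n C f) {m : ℕ} (hm : m ≤ n) : IteratedDerivBddBy m C f :=
  ⟨h.1.of_le (by exact_mod_cast hm), fun k hk => h.2 k (hk.trans hm)⟩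

theorem succ_of_deriv (hf : Differentiable ℝ f) (h0 : ∀ x, ‖f x‖ ≤ C)
    (hd : IteratedDerivBddBy n C (deriv f)) : IteratedDerivBddBy (n + 1) C f := by
  refine ⟨contDiff_succ_iff_deriv.2 ⟨hf, by simp, hd.1⟩, fun k hk x => ?_⟩
  cases k with
  | zero => simpa using h0 x
  | succ k => rw [iteratedDeriv_succ']; exact hd.2 k (by omega) x

theorem comp_add_const (h : IteratedDerivBddBy n C f) (t : ℝ) :
    IteratedDerivBddBy n C fun x => f (x + t) :=
  ⟨h.1.comp (contDiff_id.add contDiff_const), fun k hk x => by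
    rw [iteratedDeriv_comp_add_const]; exact h.2 k hk _⟩

theorem linearIsometryEquiv_comp (h : IteratedDerivBddBy n C f) (L : E ≃ₗᵢ[ℝ] F) :
    IteratedDerivBddBy n C (L ∘ f) :=
  ⟨L.contDiff.comp h.1, fun k hk x => by
    rw [norm_iteratedDeriv_linearIsometryEquiv_comp]; exact h.2 k hk x⟩

theorem const_smul {𝕜 : Type*} [NormedField 𝕜] [NormedSpace 𝕜 E] [SMulCommClass ℝ 𝕜 E]
    (h : IteratedDerivBddBy n C f) (c : 𝕜) : IteratedDerivBddBy n (‖c‖ * C) fun x => c • f x :=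
  ⟨h.1.const_smul c, fun k hk x => by
    rw [iteratedDeriv_fun_const_smul_field, norm_smul]
    exact mul_le_mul_of_nonneg_left (h.2 k hk x) (norm_nonneg c)⟩

theorem sub (hf : IteratedDerivBddBy n C f) (hg : IteratedDerivBddBy n D g) :
    IteratedDerivBddBy n (C + D) fun x => f x - g x :=
  ⟨hf.1.sub hg.1, fun k hk x => by
    have hkn : (k : WithTop ℕ∞) ≤ n := by exact_mod_cast hk
    rw [iteratedDeriv_fun_sub ((hf.1.of_le hkn).contDiffAt) ((hg.1.of_le hkn).contDiffAt)]
    exact (norm_sub_le _ _).trans (add_le_add (hf.2 k hk x) (hg.2 k hk x))⟩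

theorem mul {A : Type*} [NormedRing A] [NormedAlgebra ℝ A] {f g : ℝ → A}
    (hf : IteratedDerivBddBy n C f) (hg : IteratedDerivBddBy n D g) :
    IteratedDerivBddBy n (2 ^ n * C * D) fun x => f x * g x := by
  refine ⟨hf.1.mul hg.1, fun k hk x => ?_⟩
  have hC := hf.nonneg
  have hD := hg.nonneg
  rw [← norm_iteratedFDeriv_eq_norm_iteratedDeriv]
  calc _ ≤ ∑ i ∈ Finset.range (k + 1), (k.choose i : ℝ) * ‖iteratedFDeriv ℝ i f x‖ *
        ‖iteratedFDeriv ℝ (k - i) g x‖ :=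
        norm_iteratedFDeriv_mul_le hf.1 hg.1 x (by exact_mod_cast hk)
    _ ≤ ∑ i ∈ Finset.range (k + 1), (k.choose i : ℝ) * C * D := by
        gcongr with i hi
        · rw [norm_iteratedFDeriv_eq_norm_iteratedDeriv]
          exact hf.2 i ((Finset.mem_range_succ_iff.1 hi).trans hk) x
        · rw [norm_iteratedFDeriv_eq_norm_iteratedDeriv]
          exact hg.2 _ (by omega) x
    _ = 2 ^ k * C * D := by
        rw [← Finset.sum_mul, ← Finset.sum_mul, ← Nat.cast_sum, Nat.sum_range_choose]
        push_cast; ring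
    _ ≤ 2 ^ n * C * D := by gcongr; exact one_le_two

end IteratedDerivBddBy

theorem exists_iteratedDerivBddBy_of_hasDerivAt_eq_mul {A : Type*} [NormedRing A]
    [NormedAlgebra ℝ A] {Γ b : ℝ → A} {n : ℕ} {B C : ℝ}
    (hΓ : ∀ t, HasDerivAt Γ (Γ t * b t) t) (hB : ∀ t, ‖Γ t‖ ≤ B)
    (hb : IteratedDerivBddBy n C b) : ∃ D, IteratedDerivBddBy n D Γ := by
  have hdiff : Differentiable ℝ Γ := fun t => (hΓ t).differentiableAt
  have hderiv : deriv Γ = fun t => Γ t * b t := funext fun t => (hΓ t).deriv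
  suffices ∀ k ≤ n, ∃ D, IteratedDerivBddBy k D Γ from this n le_rfl
  intro k hk
  induction k with
  | zero => exact ⟨B, iteratedDerivBddBy_zero hdiff.continuous hB⟩
  | succ k ih =>
    obtain ⟨D, hD⟩ := ih (by omega)
    have hd : IteratedDerivBddBy k (2 ^ k * D * C) (deriv Γ) :=
      hderiv ▸ hD.mul (hb.of_le (by omega))
    exact ⟨max B (2 ^ k * D * C), .succ_of_deriv hdiff (fun t => (hB t).trans (le_max_left _ _))
      (hd.mono (le_max_right _ _))⟩

noncomputable def realStarₗᵢ {E : Type*} [NormedAddCommGroup E] [StarAddMonoid E]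
    [NormedStarGroup E] [NormedSpace ℝ E] [StarModule ℝ E] : E ≃ₗᵢ[ℝ] E :=
  { (starL' ℝ : E ≃L[ℝ] E).toLinearEquiv with norm_map' := norm_star }

theorem IteratedDerivBddBy.star {G : Type*} [NormedAddCommGroup G] [StarAddMonoid G]
    [NormedStarGroup G] [NormedSpace ℝ G] [StarModule ℝ G] {n : ℕ} {C : ℝ} {f : ℝ → G}
    (h : IteratedDerivBddBy n C f) : IteratedDerivBddBy n C fun x => star (f x) :=
  h.linearIsometryEquiv_comp realStarₗᵢ

end IteratedDerivBounds

section StronglyContinuous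

variable {E F : Type*} [NormedAddCommGroup E] [NormedAddCommGroup F]
  [NormedSpace ℝ E] [NormedSpace ℝ F]

theorem tendsto_linearIsometry_apply {α : Type*} {l : Filter α} {φ : α → E →ₗᵢ[ℝ] F}
    {x : α → E} {y : E} {z : F} (hφ : Tendsto (fun i => φ i y) l (𝓝 z))
    (hx : Tendsto x l (𝓝 y)) : Tendsto (fun i => φ i (x i)) l (𝓝 z) := by
  have h0 : Tendsto (fun i => φ i (x i - y)) l (𝓝 0) := by
    rw [tendsto_zero_iff_norm_tendsto_zero]
    simp only [LinearIsometry.norm_map]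
    exact tendsto_iff_norm_sub_tendsto_zero.1 hx
  simpa using hφ.add h0

theorem hasDerivAt_linearIsometry_sub_apply {φ : ℝ → E →ₗᵢ[ℝ] F}
    (hφ : ∀ y, Continuous fun r => φ r y) {c : ℝ → E} {c' : E} {D : F} {s t : ℝ}
    (hc : HasDerivAt c c' s) (hD : HasDerivAt (fun r => φ r (c s)) D (t - s)) :
    HasDerivAt (fun σ => φ (t - σ) (c σ)) (φ (t - s) c' - D) s := by
  have hincr : HasDerivAt (fun σ => φ (t - σ) (c σ - c s)) (φ (t - s) c') s := by
    rw [hasDerivAt_iff_tendsto_slope] at hc ⊢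
    have hslope : slope (fun σ => φ (t - σ) (c σ - c s)) s = fun σ => φ (t - σ) (slope c s σ) :=
      funext fun σ => by simp [slope_def_module, map_smul]
    rw [hslope]
    exact tendsto_linearIsometry_apply
      (((hφ c').comp (continuous_sub_left t)).tendsto s |>.mono_left nhdsWithin_le_nhds) hc
  convert hincr.add (hD.comp_const_sub t s) using 1
  · funext σ; simp
  · rw [sub_eq_add_neg]

end StronglyContinuous

section StarAlgebra

variable {A : Type*} [NormedRing A] [StarRing A] [NormedAlgebra ℝ A] [StarModule ℝ A]
  [ContinuousStar A]

theorem hasDerivAt_star_of_hasDerivAt_eq_mul {Γ b : ℝ → A} (hb : ∀ t, star (b t) = -b t)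
    {t : ℝ} (hΓ : HasDerivAt Γ (Γ t * b t) t) :
    HasDerivAt (fun s => star (Γ s)) (-(b t * star (Γ t))) t := by
  simpa [hb] using hΓ.star

theorem star_mul_self_eq_one_of_hasDerivAt_eq_mul {Γ b : ℝ → A} {M : ℝ}
    (hΓ : ∀ t, HasDerivAt Γ (Γ t * b t) t) (hΓ0 : Γ 0 = 1) (hb : ∀ t, star (b t) = -b t)
    (hM : ∀ t, ‖b t‖ ≤ M) (t : ℝ) : star (Γ t) * Γ t = 1 := by
  set Y := fun s => star (Γ s) * Γ s - 1
  have hY : ∀ s, HasDerivAt Y (Y s * b s - b s * Y s) s := fun s =>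
    ((hasDerivAt_star_of_hasDerivAt_eq_mul hb (hΓ s)).mul (hΓ s)).sub_const 1
      |>.congr_deriv (by simp only [Y]; noncomm_ring)
  have hbound : ∀ s, ‖Y s * b s - b s * Y s‖ ≤ 2 * M * ‖Y s‖ := fun s => calc
    _ ≤ ‖Y s‖ * ‖b s‖ + ‖b s‖ * ‖Y s‖ :=
      (norm_sub_le _ _).trans (add_le_add (norm_mul_le _ _) (norm_mul_le _ _))
    _ ≤ ‖Y s‖ * M + M * ‖Y s‖ := by gcongr <;> exact hM s
    _ = 2 * M * ‖Y s‖ := by ring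
  exact sub_eq_zero.1 (eq_zero_of_hasDerivAt_of_norm_le hY hbound (by simp [Y, hΓ0]) t)

theorem hasDerivAt_star_mul_mul_at_zero {Γ w : ℝ → A} {γ w' : A} {s : ℝ}
    (hΓ : HasDerivAt Γ γ 0) (hΓ0 : Γ 0 = 1) (hγ : star γ = -γ) (hw : HasDerivAt w w' s) :
    HasDerivAt (fun u => star (Γ u) * w (u + s) * Γ u) (w' - (γ * w s - w s * γ)) 0 := by
  have hw0 : HasDerivAt (fun u => w (u + s)) w' 0 := .comp_add_const 0 s (by simpa using hw)
  refine ((hΓ.star.mul hw0).mul hΓ).congr_deriv ?_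
  simp only [Pi.mul_apply, hΓ0, hγ, star_one, zero_add, one_mul, mul_one]
  noncomm_ring

end StarAlgebra

section CStarAlgebra

variable {A : Type*} [CStarAlgebra A]

noncomputable def _root_.StarAlgEquiv.toRealLinearIsometryEquiv (φ : A ≃⋆ₐ[ℂ] A) :
    A ≃ₗᵢ[ℝ] A :=
  { (φ.toAlgEquiv.toLinearEquiv : A ≃ₗ[ℂ] A).restrictScalars ℝ with
    norm_map' := StarAlgEquiv.norm_map φ }

@[simp]
theorem _root_.StarAlgEquiv.toRealLinearIsometryEquiv_apply (φ : A ≃⋆ₐ[ℂ] A) (a : A) :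
    φ.toRealLinearIsometryEquiv a = φ a :=
  rfl

theorem norm_le_one_of_star_mul_self_eq_one {x : A} (h : star x * x = 1) : ‖x‖ ≤ 1 := by
  have h1 : ‖(1 : A)‖ * ‖(1 : A)‖ = ‖(1 : A)‖ := by
    simpa using (CStarRing.norm_star_mul_self (x := (1 : A))).symm
  have hx : ‖x‖ * ‖x‖ = ‖(1 : A)‖ := by rw [← CStarRing.norm_star_mul_self, h]
  have hone : ‖(1 : A)‖ ≤ 1 := by nlinarith [norm_nonneg (1 : A)]
  nlinarith [norm_nonneg x]

theorem hasDerivAt_starAlgEquiv_apply (φ : A ≃⋆ₐ[ℂ] A) {f : ℝ → A} {f' : A} {t : ℝ}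
    (hf : HasDerivAt f f' t) : HasDerivAt (fun s => φ (f s)) (φ f') t :=
  (φ.toRealLinearIsometryEquiv.toContinuousLinearEquiv : A →L[ℝ] A).hasFDerivAt.comp_hasDerivAt
    t hf

variable {τ : ℝ → A ≃⋆ₐ[ℂ] A}

theorem norm_iteratedDeriv_orbit (hτgrp : ∀ s t a, τ (s + t) a = τ s (τ t a)) (a : A) (k : ℕ)
    (x : ℝ) : ‖iteratedDeriv k (fun s => τ s a) x‖ = ‖iteratedDeriv k (fun s => τ s a) 0‖ := by
  have hshift := congrFun (iteratedDeriv_comp_const_add k (fun s => τ s a) x) 0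
  have hcomp : (fun z => τ (x + z) a) = (τ x).toRealLinearIsometryEquiv ∘ fun s => τ s a :=
    funext fun z => hτgrp x z a
  rw [add_zero, hcomp] at hshift
  rw [← hshift, norm_iteratedDeriv_linearIsometryEquiv_comp]

theorem iteratedDerivBddBy_orbit (hτgrp : ∀ s t a, τ (s + t) a = τ s (τ t a)) {a : A} {n : ℕ}
    (ha : ContDiff ℝ n fun s => τ s a) :
    IteratedDerivBddBy n (∑ k ∈ Finset.range (n + 1), ‖iteratedDeriv k (fun s => τ s a) 0‖)
      fun s => τ s a :=
  ⟨ha, fun k hk x => by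
    rw [norm_iteratedDeriv_orbit hτgrp]
    exact Finset.single_le_sum (f := fun k => ‖iteratedDeriv k (fun s => τ s a) 0‖)
      (fun _ _ => norm_nonneg _) (Finset.mem_range_succ_iff.2 hk)⟩

-- The cocycle identity `Γ (u + t) = Γ u * τ u (Γ t)`, solved for `τ u (Γ t)`.
theorem apply_eq_star_mul_of_hasDerivAt_eq_mul {Γ b : ℝ → A} {M : ℝ}
    (hΓ : ∀ t, HasDerivAt Γ (Γ t * b t) t) (hΓ0 : Γ 0 = 1) (hM : ∀ t, ‖b t‖ ≤ M)
    (hunit : ∀ t, star (Γ t) * Γ t = 1) (hτb : ∀ u s, τ u (b s) = b (u + s)) (u t : ℝ) :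
    τ u (Γ t) = star (Γ u) * Γ (u + t) := by
  set Y := fun r => Γ (u + r) - Γ u * τ u (Γ r)
  have hY : ∀ r, HasDerivAt Y (Y r * b (u + r)) r := fun r => by
    have hshift : HasDerivAt (fun r => Γ (u + r)) (Γ (u + r) * b (u + r)) r :=
      .comp_const_add u r (hΓ (u + r))
    refine (hshift.sub ((hasDerivAt_starAlgEquiv_apply (τ u) (hΓ r)).const_mul (Γ u)))
      |>.congr_deriv ?_
    simp only [Y, map_mul, hτb, sub_mul, mul_assoc]
  have hbound : ∀ r, ‖Y r * b (u + r)‖ ≤ M * ‖Y r‖ := fun r =>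
    (norm_mul_le _ _).trans (by rw [mul_comm]; gcongr; exact hM _)
  have hcocycle := sub_eq_zero.1 (eq_zero_of_hasDerivAt_of_norm_le hY hbound (by simp [Y, hΓ0]) t)
  rw [hcocycle, ← mul_assoc, hunit, one_mul]

theorem exists_isometric_cocycle (hτgrp : ∀ s t a, τ (s + t) a = τ s (τ t a))
    (hτcont : ∀ a, Continuous fun t => τ t a) {V : A} (hVsa : star V = V) :
    ∃ Γ : ℝ → A, (∀ t, HasDerivAt Γ (Γ t * (Complex.I • τ t V)) t) ∧ Γ 0 = 1 ∧
      (∀ t, star (Γ t) * Γ t = 1) ∧ ∀ u t, τ u (Γ t) = star (Γ u) * Γ (u + t) := by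
  set b : ℝ → A := fun s => Complex.I • τ s V
  have hbM : ∀ s, ‖b s‖ ≤ ‖V‖ := fun s => by simp [b, norm_smul, StarAlgEquiv.norm_map]
  have hskew : ∀ s, star (b s) = -b s := fun s => by simp [b, star_smul, ← map_star, hVsa]
  have hΓ : ∀ t, HasDerivAt (dysonSeries b) (dysonSeries b t * b t) t :=
    hasDerivAt_dysonSeries ((hτcont V).const_smul _) hbM
  have hunit := star_mul_self_eq_one_of_hasDerivAt_eq_mul hΓ dysonSeries_zero hskew hbM
  exact ⟨dysonSeries b, hΓ, dysonSeries_zero, hunit,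
    apply_eq_star_mul_of_hasDerivAt_eq_mul hΓ dysonSeries_zero hbM hunit fun u s => by
      simp [b, hτgrp]⟩

theorem map_conj_eq (hτgrp : ∀ s t a, τ (s + t) a = τ s (τ t a)) {Γ : ℝ → A}
    (hτΓ : ∀ u t, τ u (Γ t) = star (Γ u) * Γ (u + t)) (a : A) (u s : ℝ) :
    τ u (Γ s * τ s a * star (Γ s)) =
      star (Γ u) * (Γ (u + s) * τ (u + s) a * star (Γ (u + s))) * Γ u := by
  simp only [map_mul, map_star, hτΓ, ← hτgrp, star_mul, star_star, mul_assoc]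

theorem perturbed_apply_eq_conj {τV : ℝ → A ≃⋆ₐ[ℂ] A} {Γ : ℝ → A} {V a : A}
    (hτ0 : ∀ a, τ 0 a = a) (hτgrp : ∀ s t a, τ (s + t) a = τ s (τ t a))
    (hτV0 : ∀ a, τV 0 a = a) (hτVcont : ∀ a, Continuous fun t => τV t a) (hVsa : star V = V)
    (hgen : ∀ a : A, Differentiable ℝ (fun s : ℝ => τ s a) →
      ∀ t : ℝ, HasDerivAt (fun s : ℝ => τV s a)
        (τV t (deriv (fun s : ℝ => τ s a) 0 + Complex.I • (V * a - a * V))) t)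
    (hΓ : ∀ t, HasDerivAt Γ (Γ t * (Complex.I • τ t V)) t) (hΓ0 : Γ 0 = 1)
    (hτΓ : ∀ u t, τ u (Γ t) = star (Γ u) * Γ (u + t))
    (ha : Differentiable ℝ fun s => τ s a) (t : ℝ) :
    τV t a = Γ t * τ t a * star (Γ t) := by
  set w := fun s => Γ s * τ s a * star (Γ s)
  have hskew : ∀ s, star (Complex.I • τ s V) = -(Complex.I • τ s V) := fun s => by
    simp [star_smul, ← map_star, hVsa]
  have hΓdiff : Differentiable ℝ Γ := fun s => (hΓ s).differentiableAt
  have hΓstar : Differentiable ℝ fun s => star (Γ s) := fun s =>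
    (hasDerivAt_star_of_hasDerivAt_eq_mul hskew (hΓ s)).differentiableAt
  have hw : Differentiable ℝ w := (hΓdiff.mul ha).mul hΓstar
  have hτw : ∀ s, (fun u => τ u (w s)) = fun u => star (Γ u) * w (u + s) * Γ u := fun s =>
    funext fun u => map_conj_eq hτgrp hτΓ a u s
  have hδ : ∀ s, HasDerivAt (fun u => τ u (w s))
      (deriv w s - Complex.I • (V * w s - w s * V)) 0 := fun s => by
    have hγ : HasDerivAt Γ (Complex.I • V) 0 := by simpa [hΓ0, hτ0] using hΓ 0
    rw [hτw]
    convert hasDerivAt_star_mul_mul_at_zero hγ hΓ0 (by simpa [hτ0] using hskew 0)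
      (hw s).hasDerivAt using 2
    simp only [smul_sub, smul_mul_assoc, mul_smul_comm]
  have hflow : ∀ s r, HasDerivAt (fun r => τV r (w s)) (τV r (deriv w s)) r := fun s r => by
    have hdom : Differentiable ℝ fun u => τ u (w s) := by
      rw [hτw]
      exact (hΓstar.mul (hw.comp (differentiable_id.add_const s))).mul hΓdiff
    simpa [(hδ s).deriv] using hgen (w s) hdom r
  have hconst : ∀ s, HasDerivAt (fun σ => τV (t - σ) (w σ)) 0 s := fun s => by
    simpa using hasDerivAt_linearIsometry_sub_apply
      (φ := fun r => (τV r).toRealLinearIsometryEquiv.toLinearIsometry) hτVcont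
      (hw s).hasDerivAt (hflow s (t - s))
  have h := is_const_of_deriv_eq_zero (fun s => (hconst s).differentiableAt)
    (fun s => (hconst s).deriv) 0 t
  simpa [w, hΓ0, hτ0, hτV0] using h

end CStarAlgebra

end PerturbedDynamics

open PerturbedDynamics in
theorem perturbed_orbit_in_domain_uniform_bound_general
    {A : Type*} [NormedRing A] [StarRing A] [CStarRing A]
    [NormedAlgebra ℂ A] [CompleteSpace A] [StarModule ℂ A]
    (τ τV : ℝ → A ≃⋆ₐ[ℂ] A)
    (hτ0 : ∀ a : A, τ 0 a = a) (hτgrp : ∀ s t : ℝ, ∀ a : A, τ (s + t) a = τ s (τ t a))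
    (hτV0 : ∀ a : A, τV 0 a = a)
    (hτcont : ∀ a : A, Continuous fun t : ℝ => τ t a)
    (hτVcont : ∀ a : A, Continuous fun t : ℝ => τV t a)
    (V : A) (hVsa : star V = V)
    (hgen : ∀ a : A, Differentiable ℝ (fun s : ℝ => τ s a) →
      ∀ t : ℝ, HasDerivAt (fun s : ℝ => τV s a)
        (τV t (deriv (fun s : ℝ => τ s a) 0 + Complex.I • (V * a - a * V))) t)
    (n : ℕ)
    (hVdom : ContDiff ℝ n fun s : ℝ => τ s V) :
    (∀ t : ℝ, ContDiff ℝ n fun s : ℝ => τ s (V - τV t V)) ∧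
    ∃ C : ℝ, ∀ t : ℝ,
      ‖iteratedDeriv n (fun s : ℝ => τ s (V - τV t V)) 0‖ ≤ C := by
  let _ : CStarAlgebra A := {}
  obtain ⟨C, hC⟩ : ∃ C, ∀ t, IteratedDerivBddBy n C fun s => τ s (V - τV t V) := by
    rcases Nat.eq_zero_or_pos n with rfl | hn
    · refine ⟨2 * ‖V‖, fun t => iteratedDerivBddBy_zero (hτcont _) fun s => ?_⟩
      rw [StarAlgEquiv.norm_map, two_mul]
      exact (norm_sub_le _ _).trans_eq (by rw [StarAlgEquiv.norm_map])
    obtain ⟨Γ, hΓ, hΓ0, hunit, hτΓ⟩ := exists_isometric_cocycle hτgrp hτcont hVsa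
    have hVorb := iteratedDerivBddBy_orbit hτgrp hVdom
    obtain ⟨CΓ, hΓbdd⟩ := exists_iteratedDerivBddBy_of_hasDerivAt_eq_mul hΓ
      (fun t => norm_le_one_of_star_mul_self_eq_one (hunit t)) (hVorb.const_smul Complex.I)
    have hVdiff : Differentiable ℝ fun s => τ s V :=
      hVdom.differentiable (by exact_mod_cast hn.ne')
    have horbit : ∀ t, (fun s => τ s (V - τV t V)) = fun u => τ u V -
        star (Γ u) * (Γ (u + t) * τ (u + t) V * star (Γ (u + t))) * Γ u :=
      fun t => funext fun u => by
        rw [map_sub, perturbed_apply_eq_conj hτ0 hτgrp hτV0 hτVcont hVsa hgen hΓ hΓ0 hτΓ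
          hVdiff, map_conj_eq hτgrp hτΓ]
    have hconj := (hΓbdd.mul hVorb).mul hΓbdd.star
    exact ⟨_, fun t =>
      horbit t ▸ hVorb.sub ((hΓbdd.star.mul (hconj.comp_add_const t)).mul hΓbdd)⟩
  exact ⟨fun t => (hC t).1, C, fun t => (hC t).2 n le_rfl 0⟩

/-- Let `𝒪` be a C*-algebra with a strongly continuous one-parameter
group `τ` of *-automorphisms with generator `δ` (membership in `Dom(δⁿ)` is expressed,
equivalently, as `n`-fold norm differentiability of the orbit `s ↦ τˢ(a)`, and
`δⁿ(a) = (d/ds)ⁿ τˢ(a)|_{s=0}`). Let `V` be self-adjoint with `V ∈ Dom(δⁿ)`, and let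
`τ_V` be the perturbed dynamics generated by `δ_V = δ + i[V,·]`. Then
`V − τ_V^t(V) ∈ Dom(δⁿ)` for all `t` and `sup_{t∈ℝ} ‖δⁿ(V − τ_V^t(V))‖ < ∞`. -/
theorem perturbed_orbit_in_domain_uniform_bound
    {A : Type*} [NormedRing A] [StarRing A] [CStarRing A]
    [NormedAlgebra ℂ A] [CompleteSpace A] [StarModule ℂ A]
    (τ τV : ℝ → A ≃⋆ₐ[ℂ] A)
    (hτ0 : ∀ a : A, τ 0 a = a) (hτgrp : ∀ s t : ℝ, ∀ a : A, τ (s + t) a = τ s (τ t a))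
    (hτV0 : ∀ a : A, τV 0 a = a)
    (hτVgrp : ∀ s t : ℝ, ∀ a : A, τV (s + t) a = τV s (τV t a))
    (hτcont : ∀ a : A, Continuous fun t : ℝ => τ t a)
    (hτVcont : ∀ a : A, Continuous fun t : ℝ => τV t a)
    (V : A) (hVsa : star V = V)
    (hgen : ∀ a : A, Differentiable ℝ (fun s : ℝ => τ s a) →
      ∀ t : ℝ, HasDerivAt (fun s : ℝ => τV s a)
        (τV t (deriv (fun s : ℝ => τ s a) 0 + Complex.I • (V * a - a * V))) t)
    (n : ℕ)
    (hVdom : ContDiff ℝ n fun s : ℝ => τ s V) :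
    (∀ t : ℝ, ContDiff ℝ n fun s : ℝ => τ s (V - τV t V)) ∧
    ∃ C : ℝ, ∀ t : ℝ,
      ‖iteratedDeriv n (fun s : ℝ => τ s (V - τV t V)) 0‖ ≤ C :=
  perturbed_orbit_in_domain_uniform_bound_general τ τV hτ0 hτgrp hτV0 hτcont hτVcont V hVsa hgen n
    hVdom
end

section
/- Let A be a bounded positive operator with trivial kernel on a Hilbert space, h̄ a self-adjoint operator, and ψ ≠ 0 a vector that is not an eigenvector of h̄. Then for any nontrivial interval (t₁, t₂) ⊂ ℝ, inf_{e ∈ ℝ₊} ∫_{t₁}^{t₂} ‖A(1 − e^{−it(h̄ − e)})ψ‖² dt > 0. -/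
/-!
Write `F e` for the integral. For each fixed `e` the integrand is continuous and, since `ker A = 0`
and `ψ` is not an eigenvector, it cannot vanish on all of `(t₁, t₂)`: otherwise
`t ↦ e^{ite} U(-t)` would fix `ψ` on an open set of times, hence (its stabiliser being an open, so
clopen, subgroup of `ℝ`) at all times. Thus `F e > 0`, and `F` is continuous. For large `e`,
expanding the square gives `F e ≥ (t₂ - t₁)‖Aψ‖² - 2 Re ∫ e^{ite} ⟪Aψ, AU(-t)ψ⟫ dt`, whose last
term tends to `0` by the Riemann–Lebesgue lemma. A positive continuous function that stays
above a positive constant near `+∞` is bounded below by a positive constant on `[0, ∞)`.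
-/

open Filter Topology Set intervalIntegral

theorem apply_eq_self_of_eventually_apply_eq_self {G X : Type*} [AddGroup G] [TopologicalSpace G]
    [SeparatelyContinuousAdd G] [PreconnectedSpace G] (V : G → X → X) (hV0 : ∀ x, V 0 x = x)
    (hVadd : ∀ s t x, V (s + t) x = V s (V t x)) {x : X} {g : G}
    (hfix : ∀ᶠ t in 𝓝 g, V t x = x) (t : G) : V t x = x := by
  let S : AddSubgroup G :=
    { carrier := {t | V t x = x}
      zero_mem' := hV0 x
      add_mem' := fun {a b} (ha : V a x = x) (hb : V b x = x) => by
        show V (a + b) x = x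
        rw [hVadd, hb, ha]
      neg_mem' := fun {a} (ha : V a x = x) => by
        show V (-a) x = x
        conv_lhs => rw [← ha, ← hVadd, neg_add_cancel, hV0] }
  have hS : IsOpen (S : Set G) := S.isOpen_of_mem_nhds (g := g) hfix
  have hSuniv : (S : Set G) = univ :=
    IsClopen.eq_univ ⟨S.isClosed_of_isOpen hS, hS⟩ ⟨0, S.zero_mem⟩
  exact (hSuniv ▸ mem_univ t : t ∈ (S : Set G))

theorem apply_eq_exp_smul_of_forall_mem_Ioo {H : Type*} [TopologicalSpace H] [AddCommGroup H]
    [Module ℂ H] (U : ℝ → H →L[ℂ] H) (hU0 : U 0 = 1)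
    (hUgrp : ∀ s t : ℝ, ∀ x : H, U (s + t) x = U s (U t x)) {ψ : H} {e t₁ t₂ : ℝ}
    (h12 : t₁ < t₂)
    (hfix : ∀ t ∈ Ioo t₁ t₂, Complex.exp (Complex.I * t * e) • U (-t) ψ = ψ) (t : ℝ) :
    U t ψ = Complex.exp (Complex.I * e * t) • ψ := by
  let V : ℝ → H → H := fun t x => Complex.exp (Complex.I * t * e) • U (-t) x
  have hV0 : ∀ x, V 0 x = x := by simp [V, hU0]
  have hVadd : ∀ s t x, V (s + t) x = V s (V t x) := by
    intro s t x
    simp only [V, map_smul, smul_smul, ← Complex.exp_add, neg_add, hUgrp]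
    congr 2
    push_cast
    ring
  have hnhds : ∀ᶠ t in 𝓝 ((t₁ + t₂) / 2), V t ψ = ψ :=
    eventually_of_mem (Ioo_mem_nhds (by linarith) (by linarith)) hfix
  have hVt := apply_eq_self_of_eventually_apply_eq_self V hV0 hVadd hnhds (-t)
  simp only [V, neg_neg] at hVt
  conv_rhs => rw [← hVt, smul_smul, ← Complex.exp_add]
  rw [show Complex.I * e * t + Complex.I * ↑(-t) * e = 0 by push_cast; ring, Complex.exp_zero,
    one_smul]

theorem intervalIntegral_pos_of_continuous_of_nonneg {μ : MeasureTheory.Measure ℝ}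
    [μ.IsOpenPosMeasure] [MeasureTheory.IsLocallyFiniteMeasure μ] {f : ℝ → ℝ} {a b t₀ : ℝ}
    (hf : Continuous f) (hf0 : 0 ≤ f) (ht₀ : t₀ ∈ Ioo a b) (hft₀ : f t₀ ≠ 0) :
    0 < ∫ t in a..b, f t ∂μ := by
  refine (integral_pos_iff_support_of_nonneg_ae (MeasureTheory.ae_of_all _ hf0)
    (hf.intervalIntegrable a b)).2 ⟨ht₀.1.trans ht₀.2, ?_⟩
  calc 0 < μ (Function.support f ∩ Ioo a b) :=
        (hf.isOpen_support.inter isOpen_Ioo).measure_pos μ ⟨t₀, hft₀, ht₀⟩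
    _ ≤ μ (Function.support f ∩ Ioc a b) :=
        MeasureTheory.measure_mono (inter_subset_inter_right _ Ioo_subset_Ioc_self)

theorem tendsto_setIntegral_exp_mul_smul_atTop {E : Type*} [NormedAddCommGroup E]
    [NormedSpace ℂ E] (f : ℝ → E) (s : Set ℝ) (hs : MeasurableSet s) :
    Tendsto (fun e : ℝ => ∫ t in s, Complex.exp (Complex.I * t * e) • f t) atTop (𝓝 0) := by
  have hscale : Tendsto (fun e : ℝ => -(2 * Real.pi)⁻¹ * e) atTop (cocompact ℝ) :=
    (tendsto_cocompact_mul_left₀ (by simp [Real.pi_ne_zero])).mono_left atTop_le_cocompact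
  refine ((Real.tendsto_integral_exp_smul_cocompact (s.indicator f)).comp hscale).congr
    fun e => ?_
  have hchar : ∀ t : ℝ, (Real.fourierChar (-(t * (-(2 * Real.pi)⁻¹ * e))) : ℂ) =
      Complex.exp (Complex.I * t * e) := fun t => by
    rw [Real.fourierChar_apply]
    congr 1
    push_cast
    field_simp
  rw [← MeasureTheory.integral_indicator hs]
  simp only [Function.comp_apply, Circle.smul_def, hchar, indicator_smul_apply]

theorem tendsto_intervalIntegral_exp_mul_smul_atTop {E : Type*} [NormedAddCommGroup E]
    [NormedSpace ℂ E] (f : ℝ → E) (a b : ℝ) :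
    Tendsto (fun e : ℝ => ∫ t in a..b, Complex.exp (Complex.I * t * e) • f t) atTop (𝓝 0) := by
  simpa only [intervalIntegral, sub_zero] using
    (tendsto_setIntegral_exp_mul_smul_atTop f _ measurableSet_Ioc).sub
      (tendsto_setIntegral_exp_mul_smul_atTop f (Ioc b a) measurableSet_Ioc)

theorem eventually_le_intervalIntegral_norm_sub_exp_smul_sq {H : Type*} [NormedAddCommGroup H]
    [InnerProductSpace ℂ H] {w : ℝ → H} (hw : Continuous w) (y : H) {a b L : ℝ} (hab : a ≤ b)
    (hL : L < (b - a) * ‖y‖ ^ 2) :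
    ∀ᶠ e : ℝ in atTop, L ≤ ∫ t in a..b, ‖y - Complex.exp (Complex.I * t * e) • w t‖ ^ 2 := by
  let φ : ℝ → ℝ → ℂ := fun e t => Complex.exp (Complex.I * t * e) • inner ℂ y (w t)
  have hφ : ∀ e, Continuous (φ e) := fun e => by fun_prop
  have hlower : ∀ e, (b - a) * ‖y‖ ^ 2 - 2 * (∫ t in a..b, φ e t).re ≤
      ∫ t in a..b, ‖y - Complex.exp (Complex.I * t * e) • w t‖ ^ 2 := by
    intro e
    have hre : (∫ t in a..b, φ e t).re = ∫ t in a..b, (φ e t).re :=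
      (Complex.reCLM.intervalIntegral_comp_comm ((hφ e).intervalIntegrable a b)).symm
    have hpoint : ∀ t, ‖y‖ ^ 2 - 2 * (φ e t).re ≤
        ‖y - Complex.exp (Complex.I * t * e) • w t‖ ^ 2 := fun t => by
      rw [@norm_sub_sq ℂ, inner_smul_right]
      simp only [φ, smul_eq_mul, RCLike.re_to_complex]
      linarith [sq_nonneg ‖Complex.exp (Complex.I * t * e) • w t‖]
    have hreφ : Continuous fun t => (φ e t).re := Complex.continuous_re.comp (hφ e)
    calc (b - a) * ‖y‖ ^ 2 - 2 * (∫ t in a..b, φ e t).re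
        = ∫ t in a..b, (‖y‖ ^ 2 - 2 * (φ e t).re) := by
          rw [hre, integral_sub intervalIntegrable_const
            ((hreφ.intervalIntegrable a b).const_mul 2), integral_const_mul, integral_const, smul_eq_mul]
      _ ≤ ∫ t in a..b, ‖y - Complex.exp (Complex.I * t * e) • w t‖ ^ 2 :=
          integral_mono_on hab ((continuous_const.sub (hreφ.const_mul 2)).intervalIntegrable a b)
            ((by fun_prop : Continuous _).intervalIntegrable a b) fun t _ => hpoint t
  have hlim : Tendsto (fun e => (b - a) * ‖y‖ ^ 2 - 2 * (∫ t in a..b, φ e t).re) atTop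
      (𝓝 ((b - a) * ‖y‖ ^ 2)) := by
    have := tendsto_const_nhds (x := (b - a) * ‖y‖ ^ 2) |>.sub
      (((Complex.continuous_re.tendsto 0).comp
        (tendsto_intervalIntegral_exp_mul_smul_atTop (fun t => inner ℂ y (w t)) a b)).const_mul 2)
    rwa [Complex.zero_re, mul_zero, sub_zero] at this
  filter_upwards [hlim.eventually (lt_mem_nhds hL)] with e he
  exact he.le.trans (hlower e)

theorem exists_pos_le_of_eventually_le {F : ℝ → ℝ} {a L : ℝ} (hF : ContinuousOn F (Ici a))
    (hpos : ∀ e, a ≤ e → 0 < F e) (hL : 0 < L) (hev : ∀ᶠ e in atTop, L ≤ F e) :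
    ∃ c, 0 < c ∧ ∀ e, a ≤ e → c ≤ F e := by
  obtain ⟨E, hE⟩ := eventually_atTop.1 hev
  obtain ⟨e₀, he₀, hmin⟩ := isCompact_Icc.exists_isMinOn
    (nonempty_Icc.2 (le_max_left a E)) (hF.mono Icc_subset_Ici_self)
  refine ⟨min L (F e₀), lt_min hL (hpos e₀ he₀.1), fun e he => ?_⟩
  rcases le_total e (max a E) with hle | hge
  · exact (min_le_right _ _).trans (hmin ⟨he, hle⟩)
  · exact (min_le_left _ _).trans (hE e ((le_max_right a E).trans hge))

theorem oscillation_integral_uniformly_positive_general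
    {H : Type*} [NormedAddCommGroup H] [InnerProductSpace ℂ H]
    (A : H →L[ℂ] H) (hAker : ∀ x : H, A x = 0 → x = 0)
    (hbar : H →ₗ[ℂ] H)
    (U : ℝ → H →L[ℂ] H) (hU0 : U 0 = 1)
    (hUgrp : ∀ s t : ℝ, ∀ x : H, U (s + t) x = U s (U t x))
    (hUgen : ∀ (t : ℝ) (x : H),
      HasDerivAt (fun s : ℝ => U s x) (Complex.I • hbar (U t x)) t)
    (ψ : H) (hψ : ψ ≠ 0)
    (hnoteig : ¬∃ lam : ℝ, ∀ t : ℝ,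
      U t ψ = Complex.exp (Complex.I * (lam : ℂ) * (t : ℂ)) • ψ)
    (t₁ t₂ : ℝ) (h12 : t₁ < t₂) :
    ∃ c : ℝ, 0 < c ∧ ∀ e : ℝ, 0 ≤ e →
      c ≤ ∫ t in t₁..t₂,
        ‖A (ψ - Complex.exp (Complex.I * (t : ℂ) * (e : ℂ)) • U (-t) ψ)‖ ^ 2 := by
  have hUψ : Continuous fun t => U (-t) ψ :=
    (continuous_iff_continuousAt.2 fun t => (hUgen t ψ).continuousAt).comp continuous_neg
  let f : ℝ → ℝ → ℝ := fun e t => ‖A (ψ - Complex.exp (Complex.I * t * e) • U (-t) ψ)‖ ^ 2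
  have hexp : Continuous fun p : ℝ × ℝ => Complex.exp (Complex.I * p.2 * p.1) := by fun_prop
  have hf : Continuous f.uncurry :=
    (A.continuous.comp (continuous_const.sub (hexp.smul (hUψ.comp continuous_snd)))).norm.pow 2
  have hpos : ∀ e, 0 < ∫ t in t₁..t₂, f e t := by
    intro e
    obtain ⟨t₀, ht₀, hne⟩ :
        ∃ t₀ ∈ Ioo t₁ t₂, Complex.exp (Complex.I * t₀ * e) • U (-t₀) ψ ≠ ψ := by
      by_contra! hfix
      exact hnoteig ⟨e, apply_eq_exp_smul_of_forall_mem_Ioo U hU0 hUgrp h12 hfix⟩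
    refine intervalIntegral_pos_of_continuous_of_nonneg (by fun_prop) (fun t => by positivity)
      ht₀ ?_
    exact pow_ne_zero 2 (norm_ne_zero_iff.2 fun h => hne (sub_eq_zero.1 (hAker _ h)).symm)
  have hAψ : 0 < (t₂ - t₁) * ‖A ψ‖ ^ 2 :=
    mul_pos (sub_pos.2 h12) (pow_pos (norm_pos_iff.2 fun h => hψ (hAker ψ h)) 2)
  have hlarge := eventually_le_intervalIntegral_norm_sub_exp_smul_sq (A.continuous.comp hUψ) (A ψ)
    h12.le (half_lt_self hAψ)
  simp only [Function.comp_apply, ← map_smul A, ← map_sub A] at hlarge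
  exact exists_pos_le_of_eventually_le (continuous_parametric_intervalIntegral_of_continuous' hf
    t₁ t₂).continuousOn (fun e _ => hpos e) (half_pos hAψ) hlarge

/-- Let `A` be a bounded positive operator with trivial kernel on a
Hilbert space, `h̄` a self-adjoint operator generating the unitary group
`U t = e^{ith̄}` (so `e^{−it(h̄−e)}ψ = e^{ite} U(−t)ψ`), and `ψ ≠ 0` a vector that is
not an eigenvector of `h̄`. Then for any nontrivial interval `(t₁, t₂)`,
`inf_{e ∈ ℝ₊} ∫_{t₁}^{t₂} ‖A(1 − e^{−it(h̄−e)})ψ‖² dt > 0`. -/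
theorem oscillation_integral_uniformly_positive
    {H : Type*} [NormedAddCommGroup H] [InnerProductSpace ℂ H] [CompleteSpace H]
    (A : H →L[ℂ] H) (hApos : A.IsPositive) (hAker : ∀ x : H, A x = 0 → x = 0)
    (hbar : H →ₗ[ℂ] H)
    (hsym : ∀ x y : H, (inner ℂ (hbar x) y : ℂ) = inner ℂ x (hbar y))
    (U : ℝ → H →L[ℂ] H) (hU0 : U 0 = 1)
    (hUgrp : ∀ s t : ℝ, ∀ x : H, U (s + t) x = U s (U t x))
    (hUiso : ∀ (t : ℝ) (x : H), ‖U t x‖ = ‖x‖)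
    (hUgen : ∀ (t : ℝ) (x : H),
      HasDerivAt (fun s : ℝ => U s x) (Complex.I • hbar (U t x)) t)
    (ψ : H) (hψ : ψ ≠ 0)
    (hnoteig : ¬∃ lam : ℝ, ∀ t : ℝ,
      U t ψ = Complex.exp (Complex.I * (lam : ℂ) * (t : ℂ)) • ψ)
    (t₁ t₂ : ℝ) (h12 : t₁ < t₂) :
    ∃ c : ℝ, 0 < c ∧ ∀ e : ℝ, 0 ≤ e →
      c ≤ ∫ t in t₁..t₂,
        ‖A (ψ - Complex.exp (Complex.I * (t : ℂ) * (e : ℂ)) • U (-t) ψ)‖ ^ 2 :=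
  oscillation_integral_uniformly_positive_general A hAker hbar U hU0 hUgrp hUgen ψ hψ hnoteig t₁ t₂
    h12
end

section
/- Let h₀ = ε₀ ⊕ ê on 𝔥 = ℂ ⊕ L²(ℝ₊) with ε₀ > 0, and let v = ψ₀⟨ψ_f,·⟩ + ψ_f⟨ψ₀,·⟩ with f ∈ Dom(ê^{−1/2}), h = h₀ + v. Then h₀^{−1/2} h h₀^{−1/2} = 1 + (ε₀^{−1/2}ψ₀)⟨h₀^{−1/2}ψ_f, ·⟩ + (h₀^{−1/2}ψ_f)⟨ε₀^{−1/2}ψ₀, ·⟩ is bounded, and its spectrum equals {1, 1 + ε₀^{−1/2}‖ê^{−1/2}f‖, 1 − ε₀^{−1/2}‖ê^{−1/2}f‖}. -/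
/-!
Write the perturbation as `A = u⟨v, ·⟩ + v⟨u, ·⟩` with `u = ε₀^{-1/2} ψ₀` orthogonal to `v = g`.
Then `A u = ‖u‖² v`, `A v = ‖v‖² u` and `A` vanishes on `{u, v}ᗮ`, so `A³ = (‖u‖‖v‖)² A` and the
spectrum of `A` lies in `{0, ±‖u‖‖v‖}`. All three values are eigenvalues: `‖v‖ u ± ‖u‖ v` are
eigenvectors for `±‖u‖‖v‖`, and any nonzero vector orthogonal to `u` and `v` is in the kernel.
Shifting by the identity gives the spectrum of `1 + A`.
-/

open Polynomial in
theorem spectrum.subset_of_pow_three_eq_sq_smul {𝕜 A : Type*} [Field 𝕜] [Ring A] [Algebra 𝕜 A]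
    [Nontrivial A] {a : A} {r : 𝕜} (h : a ^ 3 = r ^ 2 • a) : spectrum 𝕜 a ⊆ {0, r, -r} := by
  intro k hk
  have hann : aeval a (X ^ 3 - C (r ^ 2) * X) = 0 := by
    simp [h, Algebra.smul_def]
  have hroot : k ^ 3 - r ^ 2 * k = 0 := by
    have := spectrum.subset_polynomial_aeval a (X ^ 3 - C (r ^ 2) * X) ⟨k, hk, rfl⟩
    rw [hann, spectrum.zero_eq] at this
    simpa using this
  have hfactor : k * (k - r) * (k + r) = 0 := by linear_combination hroot
  simpa [or_assoc, sub_eq_zero, add_eq_zero_iff_eq_neg] using hfactor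

theorem ContinuousLinearMap.mem_spectrum_of_apply_eq_smul {𝕜 E : Type*} [NontriviallyNormedField 𝕜]
    [NormedAddCommGroup E] [NormedSpace 𝕜 E] {T : E →L[𝕜] E} {μ : 𝕜} {x : E} (hx : x ≠ 0)
    (h : T x = μ • x) : μ ∈ spectrum 𝕜 T := by
  intro hu
  obtain ⟨S, hS⟩ := hu.exists_left_inv
  apply hx
  simpa [h, Algebra.algebraMap_eq_smul_one] using congr($hS x).symm

namespace InnerProductSpace

variable {𝕜 E : Type*} [RCLike 𝕜] [NormedAddCommGroup E] [InnerProductSpace 𝕜 E]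

variable (𝕜) in
noncomputable def symmRankTwo (u v : E) : E →L[𝕜] E :=
  (innerSL 𝕜 v).smulRight u + (innerSL 𝕜 u).smulRight v

variable {u v : E}

@[simp]
theorem symmRankTwo_apply (x : E) : symmRankTwo 𝕜 u v x = ⟪v, x⟫_𝕜 • u + ⟪u, x⟫_𝕜 • v := rfl

theorem symmRankTwo_apply_left (huv : ⟪u, v⟫_𝕜 = 0) :
    symmRankTwo 𝕜 u v u = ((‖u‖ ^ 2 : ℝ) : 𝕜) • v := by
  simp [inner_eq_zero_symm.mp huv, inner_self_eq_norm_sq_to_K]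

theorem symmRankTwo_apply_right (huv : ⟪u, v⟫_𝕜 = 0) :
    symmRankTwo 𝕜 u v v = ((‖v‖ ^ 2 : ℝ) : 𝕜) • u := by
  simp [huv, inner_self_eq_norm_sq_to_K]

theorem symmRankTwo_pow_three (huv : ⟪u, v⟫_𝕜 = 0) :
    symmRankTwo 𝕜 u v ^ 3 = ((‖u‖ * ‖v‖ : ℝ) : 𝕜) ^ 2 • symmRankTwo 𝕜 u v := by
  ext x
  simp only [pow_succ, pow_zero, one_mul, mul_apply_eq_comp, smul_apply]
  rw [symmRankTwo_apply x]
  simp only [map_add, map_smul, symmRankTwo_apply_left huv, symmRankTwo_apply_right huv,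
    smul_smul, smul_add]
  push_cast
  module

theorem symmRankTwo_apply_eigenvector (huv : ⟪u, v⟫_𝕜 = 0) {s : 𝕜} (hs : s ^ 2 = 1) :
    symmRankTwo 𝕜 u v ((‖v‖ : 𝕜) • u + (s * ‖u‖) • v) =
      (s * ‖u‖ * ‖v‖) • ((‖v‖ : 𝕜) • u + (s * ‖u‖) • v) := by
  simp only [map_add, map_smul, symmRankTwo_apply_left huv, symmRankTwo_apply_right huv,
    smul_smul, smul_add]
  push_cast
  linear_combination (norm := module) (-(‖u‖ : 𝕜) ^ 2 * ‖v‖) • hs • v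

theorem symmRankTwo_eigenvector_ne_zero (huv : ⟪u, v⟫_𝕜 = 0) (hu : u ≠ 0) (hv : v ≠ 0) (s : 𝕜) :
    (‖v‖ : 𝕜) • u + (s * ‖u‖) • v ≠ 0 := by
  intro h
  have := congr_arg (⟪u, ·⟫_𝕜) h
  simp [inner_add_right, inner_smul_right, huv, inner_self_eq_norm_sq_to_K, hu, hv] at this

theorem spectrum_symmRankTwo (huv : ⟪u, v⟫_𝕜 = 0)
    (hz : ∃ z : E, z ≠ 0 ∧ ⟪u, z⟫_𝕜 = 0 ∧ ⟪v, z⟫_𝕜 = 0) :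
    spectrum 𝕜 (symmRankTwo 𝕜 u v) = {0, ((‖u‖ * ‖v‖ : ℝ) : 𝕜), -((‖u‖ * ‖v‖ : ℝ) : 𝕜)} := by
  obtain ⟨z, hz0, huz, hvz⟩ := hz
  have : Nontrivial E := nontrivial_of_ne z 0 hz0
  refine (spectrum.subset_of_pow_three_eq_sq_smul (symmRankTwo_pow_three huv)).antisymm ?_
  have hzero : (0 : 𝕜) ∈ spectrum 𝕜 (symmRankTwo 𝕜 u v) :=
    ContinuousLinearMap.mem_spectrum_of_apply_eq_smul hz0 (by simp [huz, hvz])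
  by_cases huv0 : u = 0 ∨ v = 0
  · rcases huv0 with rfl | rfl <;> simpa using hzero
  push Not at huv0
  have heigen (s : 𝕜) (hs : s ^ 2 = 1) :
      s * ((‖u‖ * ‖v‖ : ℝ) : 𝕜) ∈ spectrum 𝕜 (symmRankTwo 𝕜 u v) := by
    refine ContinuousLinearMap.mem_spectrum_of_apply_eq_smul
      (symmRankTwo_eigenvector_ne_zero huv huv0.1 huv0.2 s) ?_
    rw [symmRankTwo_apply_eigenvector huv hs]
    push_cast
    ring_nf
  rintro k (rfl | rfl | rfl)
  · exact hzero
  · simpa using heigen 1 (one_pow 2)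
  · simpa using heigen (-1) (by norm_num)

end InnerProductSpace

open InnerProductSpace in
theorem rank_two_perturbation_of_identity_spectrum_general
    {H : Type*} [NormedAddCommGroup H] [InnerProductSpace ℂ H]
    (ψ₀ g : H) (ε₀ : ℝ) (hψ₀ : ‖ψ₀‖ = 1)
    (horth : (inner ℂ ψ₀ g : ℂ) = 0)
    (hz : ∃ z : H, z ≠ 0 ∧ (inner ℂ ψ₀ z : ℂ) = 0 ∧ (inner ℂ g z : ℂ) = 0) :
    spectrum ℂ
      ((1 : H →L[ℂ] H) +
        (innerSL ℂ g).smulRight (((Real.sqrt ε₀)⁻¹ : ℝ) • ψ₀) +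
        (innerSL ℂ (((Real.sqrt ε₀)⁻¹ : ℝ) • ψ₀)).smulRight g) =
      {(1 : ℂ), ((1 + (Real.sqrt ε₀)⁻¹ * ‖g‖ : ℝ) : ℂ),
        ((1 - (Real.sqrt ε₀)⁻¹ * ‖g‖ : ℝ) : ℂ)} := by
  set u := ((Real.sqrt ε₀)⁻¹ : ℝ) • ψ₀
  have hu : ‖u‖ = (Real.sqrt ε₀)⁻¹ := by simp [u, norm_smul, hψ₀]
  have hug : inner ℂ u g = 0 := by simp [u, horth]
  have hz' : ∃ z : H, z ≠ 0 ∧ inner ℂ u z = 0 ∧ inner ℂ g z = 0 := by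
    obtain ⟨z, hz0, hψz, hgz⟩ := hz
    exact ⟨z, hz0, by simp [u, hψz], hgz⟩
  rw [add_assoc, ← map_one (algebraMap ℂ (H →L[ℂ] H)), ← symmRankTwo,
    ← spectrum.singleton_add_eq, spectrum_symmRankTwo hug hz', hu]
  simp only [Set.singleton_add, Set.image_insert_eq, Set.image_singleton, add_zero,
    ← sub_eq_add_neg]
  push_cast
  rfl

/-- With `h₀ = ε₀ ⊕ ê` on `𝔥 = ℂ ⊕ L²(ℝ₊)`, `ε₀ > 0`,
`v = ψ₀⟨ψ_f,·⟩ + ψ_f⟨ψ₀,·⟩` and `h = h₀ + v`, the bounded operator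
`h₀^{−1/2} h h₀^{−1/2} = 1 + (ε₀^{−1/2}ψ₀)⟨h₀^{−1/2}ψ_f, ·⟩ + (h₀^{−1/2}ψ_f)⟨ε₀^{−1/2}ψ₀, ·⟩`
has spectrum `{1, 1 + ε₀^{−1/2}‖ê^{−1/2}f‖, 1 − ε₀^{−1/2}‖ê^{−1/2}f‖}`.
Here `g = h₀^{−1/2}ψ_f (= 0 ⊕ ê^{−1/2}f)` is orthogonal to `ψ₀`, `‖ψ₀‖ = 1`, and
(as in the model, where `L²(ℝ₊)` is infinite dimensional) there is a nonzero vector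
orthogonal to both. -/
theorem rank_two_perturbation_of_identity_spectrum
    {H : Type*} [NormedAddCommGroup H] [InnerProductSpace ℂ H] [CompleteSpace H]
    (ψ₀ g : H) (ε₀ : ℝ) (hε₀ : 0 < ε₀) (hψ₀ : ‖ψ₀‖ = 1)
    (horth : (inner ℂ ψ₀ g : ℂ) = 0)
    (hz : ∃ z : H, z ≠ 0 ∧ (inner ℂ ψ₀ z : ℂ) = 0 ∧ (inner ℂ g z : ℂ) = 0) :
    spectrum ℂ
      ((1 : H →L[ℂ] H) +
        (innerSL ℂ g).smulRight (((Real.sqrt ε₀)⁻¹ : ℝ) • ψ₀) +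
        (innerSL ℂ (((Real.sqrt ε₀)⁻¹ : ℝ) • ψ₀)).smulRight g) =
      {(1 : ℂ), ((1 + (Real.sqrt ε₀)⁻¹ * ‖g‖ : ℝ) : ℂ),
        ((1 - (Real.sqrt ε₀)⁻¹ * ‖g‖ : ℝ) : ℂ)} :=
  rank_two_perturbation_of_identity_spectrum_general ψ₀ g ε₀ hψ₀ horth hz
end

section
/- Let ν_t be the measure on ℝ with density dν_t(e) = ((1 − cos(et))/e²)·(|f(|e|)|²/|1 − e^{−βe}|) de, where f ∈ L²(ℝ₊) with f ∈ Dom(ê) ∩ Dom(ê^{−1/2}) and β > 0. If there exist t₁ < t₂ such that ∫_{t₁}^{t₂} ∫_ℝ e^{2n+2} dν_t(e) dt < ∞, then ∫_{ℝ₊} e^{2n} |f(e)|² de < ∞. -/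
/-!
For `e > E := 4 / (t₂ - t₁)` the time integral of `1 - cos (e t)` over `[t₁, t₂]` is at least
`(t₂ - t₁) / 2`, and the thermal factor `|1 - exp (-β e)|⁻¹` is at least `1` for `e > 0`. Hence, by
Tonelli, the assumed double integral dominates `(t₂ - t₁) / 2 · ∫_{e > E} e^{2n} |f e|²`. On the
remaining range `(0, E]` we have `e^{2n} ≤ E^{2n}`, so `f ∈ L²` suffices there.
-/

open MeasureTheory Set Real

open scoped ENNReal

/-- `g` need not be measurable: Tonelli is applied to a measurable minorant with the same
integral. -/
theorem lintegral_lt_top_of_lintegral_lintegral_mul_lt_top {α β : Type*}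
    [MeasurableSpace α] [MeasurableSpace β] {μ : Measure α} {ν : Measure β} [SFinite μ]
    [SFinite ν] {k : α → β → ℝ≥0∞} (hk : Measurable (Function.uncurry k)) {g : α → ℝ≥0∞}
    {c : ℝ≥0∞} (hc : c ≠ 0) (hkc : ∀ᵐ a ∂μ, c ≤ ∫⁻ b, k a b ∂ν)
    (h : ∫⁻ b, ∫⁻ a, k a b * g a ∂μ ∂ν < ⊤) :
    ∫⁻ a, g a ∂μ < ⊤ := by
  obtain ⟨ψ, hψ, hψg, hψ_eq⟩ := exists_measurable_le_lintegral_eq μ g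
  have hk_left (a : α) : Measurable (k a) := hk.comp measurable_prodMk_left
  have key : c * ∫⁻ a, ψ a ∂μ ≤ ∫⁻ b, ∫⁻ a, k a b * g a ∂μ ∂ν :=
    calc c * ∫⁻ a, ψ a ∂μ
        = ∫⁻ a, c * ψ a ∂μ := (lintegral_const_mul c hψ).symm
      _ ≤ ∫⁻ a, ∫⁻ b, k a b * ψ a ∂ν ∂μ := by
          refine lintegral_mono_ae (hkc.mono fun a ha => ?_)
          rw [lintegral_mul_const _ (hk_left a)]
          exact mul_le_mul_left ha _
      _ = ∫⁻ b, ∫⁻ a, k a b * ψ a ∂μ ∂ν :=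
          lintegral_lintegral_swap (hk.mul (hψ.comp measurable_fst)).aemeasurable
      _ ≤ ∫⁻ b, ∫⁻ a, k a b * g a ∂μ ∂ν :=
          lintegral_mono fun b => lintegral_mono fun a => mul_le_mul_right (hψg a) _
  rw [hψ_eq]
  exact ENNReal.lt_top_of_mul_ne_top_right (key.trans_lt h).ne hc

theorem integral_one_sub_cos_mul {e : ℝ} (he : e ≠ 0) (t₁ t₂ : ℝ) :
    ∫ t in t₁..t₂, (1 - cos (e * t)) = t₂ - t₁ - (sin (e * t₂) - sin (e * t₁)) / e := by
  rw [intervalIntegral.integral_sub intervalIntegrable_const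
    ((by fun_prop : Continuous fun t => cos (e * t)).intervalIntegrable _ _),
    intervalIntegral.integral_comp_mul_left (fun x => cos x) he, integral_cos]
  simp only [intervalIntegral.integral_const, smul_eq_mul, mul_one]
  field_simp

theorem ofReal_sub_two_div_le_setLIntegral_one_sub_cos {e t₁ t₂ : ℝ} (he : 0 < e)
    (h12 : t₁ ≤ t₂) :
    ENNReal.ofReal (t₂ - t₁ - 2 / e) ≤
      ∫⁻ t in Ioc t₁ t₂, ENNReal.ofReal (1 - cos (e * t)) := by
  have hnonneg : 0 ≤ᵐ[volume.restrict (Ioc t₁ t₂)] fun t => 1 - cos (e * t) :=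
    ae_of_all _ fun t => sub_nonneg.2 (cos_le_one _)
  rw [← ofReal_integral_eq_lintegral_ofReal
    (by fun_prop : Continuous fun t => 1 - cos (e * t)).integrableOn_Ioc hnonneg,
    ← intervalIntegral.integral_of_le h12, integral_one_sub_cos_mul he.ne']
  refine ENNReal.ofReal_le_ofReal (sub_le_sub_left ?_ _)
  rw [div_le_div_iff_of_pos_right he]
  linarith [sin_le_one (e * t₂), neg_one_le_sin (e * t₁)]

theorem ofReal_half_le_setLIntegral_one_sub_cos {e t₁ t₂ : ℝ} (h12 : t₁ < t₂)
    (he : 4 / (t₂ - t₁) < e) :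
    ENNReal.ofReal ((t₂ - t₁) / 2) ≤
      ∫⁻ t in Ioc t₁ t₂, ENNReal.ofReal (1 - cos (e * t)) := by
  have hc : 0 < t₂ - t₁ := sub_pos.2 h12
  have he0 : 0 < e := (by positivity : (0 : ℝ) < 4 / (t₂ - t₁)).trans he
  have : 2 / e ≤ (t₂ - t₁) / 2 := by
    rw [div_le_iff₀ he0]; rw [div_lt_iff₀ hc] at he; linarith
  exact (ENNReal.ofReal_le_ofReal (by linarith)).trans
    (ofReal_sub_two_div_le_setLIntegral_one_sub_cos he0 h12.le)

theorem mul_pow_mul_le_vanHove_integrand {β e : ℝ} (hβ : 0 < β) (he : 0 < e) (n : ℕ)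
    {A B : ℝ} (hA : 0 ≤ A) (hB : 0 ≤ B) :
    A * (e ^ (2 * n) * B) ≤ e ^ (2 * n + 2) * (A / e ^ 2 * (B / |1 - exp (-β * e)|)) := by
  have hexp_lt : exp (-β * e) < 1 := exp_lt_one_iff.2 (by nlinarith)
  have hthermal : |1 - exp (-β * e)| = 1 - exp (-β * e) := abs_of_pos (by linarith)
  have hrearrange : e ^ (2 * n + 2) * (A / e ^ 2 * (B / |1 - exp (-β * e)|)) =
      A * (e ^ (2 * n) * B) / (1 - exp (-β * e)) := by
    rw [hthermal, pow_add]
    field_simp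
  rw [hrearrange]
  exact le_div_self (by positivity) (by linarith) (by linarith [exp_pos (-β * e)])

theorem setLIntegral_Ioc_pow_mul_norm_sq_lt_top {F : Type*} [NormedAddCommGroup F]
    {f : ℝ → F} (hf : ∫⁻ e in Ioi 0, ENNReal.ofReal (‖f e‖ ^ 2) < ⊤) (k : ℕ) (a : ℝ) :
    ∫⁻ e in Ioc 0 a, ENNReal.ofReal (e ^ k * ‖f e‖ ^ 2) < ⊤ :=
  calc ∫⁻ e in Ioc 0 a, ENNReal.ofReal (e ^ k * ‖f e‖ ^ 2)
      ≤ ∫⁻ e in Ioc 0 a, ENNReal.ofReal (a ^ k) * ENNReal.ofReal (‖f e‖ ^ 2) := by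
        refine setLIntegral_mono' measurableSet_Ioc fun e he => ?_
        rw [← ENNReal.ofReal_mul (pow_nonneg (he.1.le.trans he.2) k)]
        exact ENNReal.ofReal_le_ofReal
          (mul_le_mul_of_nonneg_right (pow_le_pow_left₀ he.1.le he.2 k) (by positivity))
    _ = ENNReal.ofReal (a ^ k) * ∫⁻ e in Ioc 0 a, ENNReal.ofReal (‖f e‖ ^ 2) :=
        lintegral_const_mul' _ _ ENNReal.ofReal_ne_top
    _ ≤ ENNReal.ofReal (a ^ k) * ∫⁻ e in Ioi 0, ENNReal.ofReal (‖f e‖ ^ 2) :=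
        mul_le_mul_right (lintegral_mono_set Ioc_subset_Ioi_self) _
    _ < ⊤ := ENNReal.mul_lt_top ENNReal.ofReal_lt_top hf

theorem vanHove_time_integrable_moment_implies_UV_regularity_general
    (f : ℝ → ℂ) (β : ℝ) (hβ : 0 < β) (n : ℕ)
    (hL2 : ∫⁻ e in Ioi (0 : ℝ), ENNReal.ofReal (‖f e‖ ^ 2) < ⊤)
    (t₁ t₂ : ℝ) (h12 : t₁ < t₂)
    (hfin : ∫⁻ t in Ioc t₁ t₂, ∫⁻ e : ℝ,
        ENNReal.ofReal (e ^ (2 * n + 2) *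
          ((1 - Real.cos (e * t)) / e ^ 2 *
            (‖f (|e|)‖ ^ 2 / |1 - Real.exp (-β * e)|))) < ⊤) :
    ∫⁻ e in Ioi (0 : ℝ), ENNReal.ofReal (e ^ (2 * n) * ‖f e‖ ^ 2) < ⊤ := by
  set c := t₂ - t₁
  have hc : 0 < c := sub_pos.2 h12
  have hhigh : ∫⁻ e in Ioi (4 / c), ENNReal.ofReal (e ^ (2 * n) * ‖f e‖ ^ 2) < ⊤ := by
    refine lintegral_lt_top_of_lintegral_lintegral_mul_lt_top
      (k := fun e t => ENNReal.ofReal (1 - cos (e * t))) (by fun_prop)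
      (ENNReal.ofReal_pos.2 (half_pos hc)).ne' ((ae_restrict_iff' measurableSet_Ioi).2
        (ae_of_all _ fun _ => ofReal_half_le_setLIntegral_one_sub_cos h12))
      (lt_of_le_of_lt (lintegral_mono fun t => ?_) hfin)
    refine le_trans ?_ (setLIntegral_le_lintegral (Ioi (4 / c)) _)
    refine setLIntegral_mono' measurableSet_Ioi fun e he => ?_
    have he0 : 0 < e := (by positivity : (0 : ℝ) < 4 / c).trans he
    rw [← ENNReal.ofReal_mul (sub_nonneg.2 (cos_le_one _)), abs_of_pos he0]
    exact ENNReal.ofReal_le_ofReal (mul_pow_mul_le_vanHove_integrand hβ he0 n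
      (sub_nonneg.2 (cos_le_one _)) (by positivity))
  rw [← Ioc_union_Ioi_eq_Ioi (by positivity : (0 : ℝ) ≤ 4 / c)]
  exact (lintegral_union_le _ _ _).trans_lt
    (ENNReal.add_lt_top.2 ⟨setLIntegral_Ioc_pow_mul_norm_sq_lt_top hL2 _ _, hhigh⟩)

/-- Let `dν_t(e) = ((1 − cos(et))/e²)·(|f(|e|)|²/|1 − e^{−βe}|) de`
be the intensity measure of the van Hove model, with `f ∈ L²(ℝ₊)`,
`f ∈ Dom(ê) ∩ Dom(ê^{−1/2})` and `β > 0`. If there exist `t₁ < t₂` with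
`∫_{t₁}^{t₂} ∫_ℝ e^{2n+2} dν_t(e) dt < ∞`, then `∫_{ℝ₊} e^{2n} |f(e)|² de < ∞`. -/
theorem vanHove_time_integrable_moment_implies_UV_regularity
    (f : ℝ → ℂ) (β : ℝ) (hβ : 0 < β) (n : ℕ)
    (hL2 : ∫⁻ e in Ioi (0 : ℝ), ENNReal.ofReal (‖f e‖ ^ 2) < ⊤)
    (hUV : ∫⁻ e in Ioi (0 : ℝ), ENNReal.ofReal (e ^ 2 * ‖f e‖ ^ 2) < ⊤)
    (hIR : ∫⁻ e in Ioi (0 : ℝ), ENNReal.ofReal (‖f e‖ ^ 2 / e) < ⊤)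
    (t₁ t₂ : ℝ) (h12 : t₁ < t₂)
    (hfin : ∫⁻ t in Ioc t₁ t₂, ∫⁻ e : ℝ,
        ENNReal.ofReal (e ^ (2 * n + 2) *
          ((1 - Real.cos (e * t)) / e ^ 2 *
            (‖f (|e|)‖ ^ 2 / |1 - Real.exp (-β * e)|))) < ⊤) :
    ∫⁻ e in Ioi (0 : ℝ), ENNReal.ofReal (e ^ (2 * n) * ‖f e‖ ^ 2) < ⊤ :=
  vanHove_time_integrable_moment_implies_UV_regularity_general f β hβ n hL2 t₁ t₂ h12 hfin
end

section
/- Define f_n : ℝ₊ → ℂ by f_n(e) = (⌈e⌉)^{−(n+1)}(⌈e⌉ − e − i⌈e⌉^{−1})^{−1} for e ≥ 1 and f_n(e) = ie for 0 ≤ e < 1, where n ≥ 1. Then f_n ∈ L²(ℝ₊) and ∫_{ℝ₊} e^{2n}|f_n(e)|² de = ∞ (i.e., f_n ∉ Dom(êⁿ)), but ∫_{ℝ₊} e^{2n}(1 − cos(2πe))|f_n(e)|² de < ∞. -/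
/-!
Write `M = ⌈e⌉`. For `e ≥ 1` one has `|f_n(e)|² = 1 / (M^{2n} (1 + M²(M - e)²))`, so `|f_n|²` is
at most `1` and, for `n ≥ 1`, at most `1/e²`: hence `f_n ∈ L²`. The weight `e^{2n}` cancels the
factor `M^{-2n}` up to a constant on the spike `M - 1/M < e ≤ M`, which has width `1/M`, so
`∫ e^{2n}|f_n|²` dominates the harmonic series. Finally `1 - cos(2πe) ≤ 2π²(M - e)²` vanishes
to second order at the integer `M` and kills the spike: `e^{2n}(1 - cos 2πe)|f_n|² ≤ 2π²/e²`.
-/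

open MeasureTheory Set

/-- The form factor `f_n(e) = ⌈e⌉^{−(n+1)}(⌈e⌉ − e − i⌈e⌉^{−1})^{−1}` for `e ≥ 1`
and `f_n(e) = ie` for `0 ≤ e < 1`. -/
noncomputable def fAux (n : ℕ) (e : ℝ) : ℂ :=
  if e < 1 then Complex.I * (e : ℂ)
  else ((⌈e⌉ : ℂ) ^ (n + 1) * ((⌈e⌉ : ℂ) - (e : ℂ) - Complex.I * (⌈e⌉ : ℂ)⁻¹))⁻¹

lemma tsum_ofReal_eq_top_of_not_summable {ι : Type*} {f : ι → ℝ} (hf : ∀ i, 0 ≤ f i)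
    (h : ¬Summable f) : ∑' i, ENNReal.ofReal (f i) = ⊤ := by
  by_contra h'
  exact h ((ENNReal.summable_toReal h').congr fun i => ENNReal.toReal_ofReal (hf i))

lemma setLIntegral_Ioi_zero_ofReal_lt_top {g : ℝ → ℝ} {C₀ C₁ : ℝ}
    (h₀ : ∀ e ∈ Ioc 0 1, g e ≤ C₀) (h₁ : ∀ e ∈ Ioi 1, g e ≤ C₁ / e ^ 2) :
    ∫⁻ e in Ioi 0, ENNReal.ofReal (g e) < ⊤ := by
  rw [← Ioc_union_Ioi_eq_Ioi zero_le_one]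
  refine (lintegral_union_le _ _ _).trans_lt (ENNReal.add_lt_top.2 ⟨?_, ?_⟩)
  · calc ∫⁻ e in Ioc 0 1, ENNReal.ofReal (g e) ≤ ∫⁻ _ in Ioc (0 : ℝ) 1, ENNReal.ofReal C₀ :=
          setLIntegral_mono' measurableSet_Ioc fun e he => ENNReal.ofReal_le_ofReal (h₀ e he)
      _ < ⊤ := by simp
  · have hint : IntegrableOn (fun e : ℝ => C₁ / e ^ 2) (Ioi 1) := by
      have hrpow : IntegrableOn (fun e : ℝ => C₁ * e ^ (-2 : ℝ)) (Ioi 1) :=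
        (integrableOn_Ioi_rpow_of_lt (by norm_num) one_pos).const_mul C₁
      refine hrpow.congr_fun (fun e he => ?_) measurableSet_Ioi
      simp [Real.rpow_neg (zero_le_one.trans (le_of_lt he)), div_eq_mul_inv]
    exact (setLIntegral_mono' measurableSet_Ioi fun e he =>
      ENNReal.ofReal_le_ofReal (h₁ e he)).trans_lt hint.lintegral_lt_top

lemma one_sub_cos_two_pi_mul_le (e : ℝ) (z : ℤ) :
    1 - Real.cos (2 * Real.pi * e) ≤ 2 * Real.pi ^ 2 * (z - e) ^ 2 := by
  have h := Real.one_sub_sq_div_two_le_cos (x := 2 * Real.pi * (z - e))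
  rw [show 2 * Real.pi * (z - e) = z * (2 * Real.pi) - 2 * Real.pi * e by ring,
    Real.cos_int_mul_two_pi_sub] at h
  linarith

lemma ceil_eq_of_mem_Ioc_sub_inv {M : ℕ} (hM : 1 ≤ M) {e : ℝ}
    (he : e ∈ Ioc ((M : ℝ) - (M : ℝ)⁻¹) M) : ⌈e⌉ = M := by
  have hMinv : (M : ℝ)⁻¹ ≤ 1 := inv_le_one_of_one_le₀ (by exact_mod_cast hM)
  exact Int.ceil_eq_iff.2 ⟨by push_cast; linarith [he.1], by push_cast; exact he.2⟩

lemma norm_fAux_sq_of_lt_one (n : ℕ) {e : ℝ} (he : e < 1) : ‖fAux n e‖ ^ 2 = e ^ 2 := by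
  rw [fAux, if_pos he, norm_mul, Complex.norm_I, one_mul, Complex.norm_real, Real.norm_eq_abs,
    sq_abs]

lemma norm_fAux_sq_of_one_le (n : ℕ) {e : ℝ} (he : 1 ≤ e) :
    ‖fAux n e‖ ^ 2 = ((⌈e⌉ : ℝ) ^ (2 * n) * (1 + ((⌈e⌉ : ℝ) * (⌈e⌉ - e)) ^ 2))⁻¹ := by
  set M : ℝ := (⌈e⌉ : ℝ)
  have hM : 0 < M := by positivity
  have hw : ((⌈e⌉ : ℂ) - (e : ℂ) - Complex.I * (⌈e⌉ : ℂ)⁻¹) =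
      ((M - e : ℝ) : ℂ) + ((-M⁻¹ : ℝ) : ℂ) * Complex.I := by
    push_cast [M]; ring
  rw [fAux, if_neg (not_lt.mpr he), hw, norm_inv, inv_pow, norm_mul, mul_pow,
    Complex.sq_norm (_ + _), Complex.normSq_add_mul_I, norm_pow, Complex.norm_intCast,
    abs_of_pos hM]
  congr 1
  field_simp
  ring

lemma norm_fAux_sq_le_one (n : ℕ) {e : ℝ} (he : 0 ≤ e) : ‖fAux n e‖ ^ 2 ≤ 1 := by
  rcases lt_or_ge e 1 with he₁ | he₁
  · rw [norm_fAux_sq_of_lt_one n he₁]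
    exact pow_le_one₀ he he₁.le
  · have hM : (1 : ℝ) ≤ ⌈e⌉ := he₁.trans (Int.le_ceil e)
    rw [norm_fAux_sq_of_one_le n he₁]
    exact inv_le_one_of_one_le₀ (one_le_mul_of_one_le_of_one_le (one_le_pow₀ hM)
      (le_add_of_nonneg_right (sq_nonneg _)))

lemma norm_fAux_sq_le_one_div_sq {n : ℕ} (hn : 1 ≤ n) {e : ℝ} (he : 1 ≤ e) :
    ‖fAux n e‖ ^ 2 ≤ 1 / e ^ 2 := by
  have hM : e ≤ ⌈e⌉ := Int.le_ceil e
  rw [norm_fAux_sq_of_one_le n he, one_div]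
  refine inv_anti₀ (by positivity) ?_
  calc e ^ 2 ≤ (⌈e⌉ : ℝ) ^ 2 := by gcongr
    _ ≤ (⌈e⌉ : ℝ) ^ (2 * n) := pow_le_pow_right₀ (he.trans hM) (by omega)
    _ ≤ _ := le_mul_of_one_le_right (by positivity) (le_add_of_nonneg_right (sq_nonneg _))

lemma pow_mul_one_sub_cos_mul_norm_fAux_sq_le_two (n : ℕ) {e : ℝ} (he : e ∈ Icc 0 1) :
    e ^ (2 * n) * (1 - Real.cos (2 * Real.pi * e)) * ‖fAux n e‖ ^ 2 ≤ 2 := by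
  have hcos : 1 - Real.cos (2 * Real.pi * e) ≤ 2 := by
    linarith [Real.neg_one_le_cos (2 * Real.pi * e)]
  calc e ^ (2 * n) * (1 - Real.cos (2 * Real.pi * e)) * ‖fAux n e‖ ^ 2 ≤ 1 * 2 * 1 := by
        gcongr
        · exact sub_nonneg.2 (Real.cos_le_one _)
        · exact pow_le_one₀ he.1 he.2
        · exact norm_fAux_sq_le_one n he.1
    _ = 2 := by norm_num

lemma pow_mul_one_sub_cos_mul_norm_fAux_sq_le (n : ℕ) {e : ℝ} (he : 1 ≤ e) :
    e ^ (2 * n) * (1 - Real.cos (2 * Real.pi * e)) * ‖fAux n e‖ ^ 2 ≤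
      2 * Real.pi ^ 2 / e ^ 2 := by
  have heM : e ≤ ⌈e⌉ := Int.le_ceil e
  have hcos := one_sub_cos_two_pi_mul_le e ⌈e⌉
  have hcos₀ : 0 ≤ 1 - Real.cos (2 * Real.pi * e) := sub_nonneg.2 (Real.cos_le_one _)
  rw [norm_fAux_sq_of_one_le n he]
  set M : ℝ := (⌈e⌉ : ℝ)
  have hM : 0 < M := by linarith
  set D : ℝ := M ^ (2 * n) * (1 + (M * (M - e)) ^ 2)
  calc e ^ (2 * n) * (1 - Real.cos (2 * Real.pi * e)) * D⁻¹
      ≤ M ^ (2 * n) * (2 * Real.pi ^ 2 * (M - e) ^ 2) * D⁻¹ := by gcongr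
    _ = 2 * Real.pi ^ 2 / M ^ 2 * ((M * (M - e)) ^ 2 / (1 + (M * (M - e)) ^ 2)) := by
        simp only [D]
        field_simp
    _ ≤ 2 * Real.pi ^ 2 / M ^ 2 := by
        refine mul_le_of_le_one_right (by positivity) ((div_le_one (by positivity)).2 ?_)
        linarith
    _ ≤ 2 * Real.pi ^ 2 / e ^ 2 := by gcongr

lemma inv_two_mul_four_pow_le_pow_mul_norm_fAux_sq (n : ℕ) {M : ℕ} (hM : 2 ≤ M) {e : ℝ}
    (he : e ∈ Ioc ((M : ℝ) - (M : ℝ)⁻¹) M) :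
    (2 * 4 ^ n)⁻¹ ≤ e ^ (2 * n) * ‖fAux n e‖ ^ 2 := by
  have hceil := ceil_eq_of_mem_Ioc_sub_inv (by omega) he
  obtain ⟨he₁, he₂⟩ := he
  have hM₂ : (2 : ℝ) ≤ M := by exact_mod_cast hM
  have hMinv : (M : ℝ)⁻¹ ≤ 2⁻¹ := inv_anti₀ two_pos hM₂
  rw [norm_fAux_sq_of_one_le n (by linarith), hceil, Int.cast_natCast]
  have hdist : (M : ℝ) * (M - e) ≤ 1 := by
    calc (M : ℝ) * (M - e) ≤ M * (M : ℝ)⁻¹ := by gcongr; linarith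
      _ = 1 := mul_inv_cancel₀ (by positivity)
  calc (2 * 4 ^ n : ℝ)⁻¹ = ((M : ℝ) / 2) ^ (2 * n) * ((M : ℝ) ^ (2 * n) * (1 + 1))⁻¹ := by
        have h4 : (2 : ℝ) ^ (2 * n) = 4 ^ n := by rw [pow_mul]; norm_num
        rw [div_pow, h4]
        field_simp
        ring
    _ ≤ e ^ (2 * n) * ((M : ℝ) ^ (2 * n) * (1 + ((M : ℝ) * (M - e)) ^ 2))⁻¹ := by
        gcongr
        · exact pow_nonneg (by linarith) _
        · linarith
        · exact pow_le_one₀ (mul_nonneg (by positivity) (by linarith)) hdist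

lemma setLIntegral_Ioi_zero_pow_mul_norm_fAux_sq_eq_top (n : ℕ) :
    ∫⁻ e in Ioi 0, ENNReal.ofReal (e ^ (2 * n) * ‖fAux n e‖ ^ 2) = ⊤ := by
  set c : ℝ := (2 * 4 ^ n)⁻¹
  set J : ℕ → Set ℝ := fun k => Ioc (((k + 2 : ℕ) : ℝ) - ((k + 2 : ℕ) : ℝ)⁻¹) ((k + 2 : ℕ) : ℝ)
  have hceil (k : ℕ) {e : ℝ} (he : e ∈ J k) : ⌈e⌉ = (k + 2 : ℕ) :=
    ceil_eq_of_mem_Ioc_sub_inv (by omega) he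
  have hspike (k : ℕ) : ENNReal.ofReal (c * ((k + 2 : ℕ) : ℝ)⁻¹) ≤
      ∫⁻ e in J k, ENNReal.ofReal (e ^ (2 * n) * ‖fAux n e‖ ^ 2) := by
    have hvol : volume (J k) = ENNReal.ofReal ((k + 2 : ℕ) : ℝ)⁻¹ := by
      rw [Real.volume_Ioc, sub_sub_cancel]
    calc ENNReal.ofReal (c * ((k + 2 : ℕ) : ℝ)⁻¹) = ∫⁻ _ in J k, ENNReal.ofReal c := by
          rw [setLIntegral_const, hvol, ENNReal.ofReal_mul (by positivity)]
      _ ≤ _ := setLIntegral_mono' measurableSet_Ioc fun e he =>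
          ENNReal.ofReal_le_ofReal (inv_two_mul_four_pow_le_pow_mul_norm_fAux_sq n (by omega) he)
  have hdisj : Pairwise (Function.onFun Disjoint J) := fun k l hkl =>
    disjoint_left.2 fun e hk hl => hkl <| by
      have : k + 2 = l + 2 := by exact_mod_cast (hceil k hk).symm.trans (hceil l hl)
      omega
  have hJ : (⋃ k, J k) ⊆ Ioi 0 := iUnion_subset fun k e he =>
    Int.ceil_pos.1 (by rw [hceil k he]; positivity)
  have hdiv : ∑' k : ℕ, ENNReal.ofReal (c * ((k + 2 : ℕ) : ℝ)⁻¹) = ⊤ := by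
    refine tsum_ofReal_eq_top_of_not_summable (fun k => by positivity) ?_
    rw [summable_mul_left_iff (by positivity)]
    exact (summable_nat_add_iff 2).not.2 Real.not_summable_natCast_inv
  refine eq_top_iff.2 ?_
  calc ⊤ = ∑' k : ℕ, ENNReal.ofReal (c * ((k + 2 : ℕ) : ℝ)⁻¹) := hdiv.symm
    _ ≤ ∑' k, ∫⁻ e in J k, ENNReal.ofReal (e ^ (2 * n) * ‖fAux n e‖ ^ 2) :=
        ENNReal.tsum_le_tsum hspike
    _ = ∫⁻ e in ⋃ k, J k, ENNReal.ofReal (e ^ (2 * n) * ‖fAux n e‖ ^ 2) :=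
        (lintegral_iUnion (fun k => measurableSet_Ioc) hdisj _).symm
    _ ≤ _ := lintegral_mono_set hJ

/-- For `n ≥ 1`, `f_n ∈ L²(ℝ₊)` and `∫ e^{2n}|f_n|² = ∞`
(so `f_n ∉ Dom(êⁿ)`), but `∫ e^{2n}(1 − cos(2πe))|f_n(e)|² de < ∞`. -/
theorem fAux_counterexample (n : ℕ) (hn : 1 ≤ n) :
    (∫⁻ e in Ioi (0 : ℝ), ENNReal.ofReal (‖fAux n e‖ ^ 2) < ⊤) ∧
    (∫⁻ e in Ioi (0 : ℝ), ENNReal.ofReal (e ^ (2 * n) * ‖fAux n e‖ ^ 2) = ⊤) ∧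
    (∫⁻ e in Ioi (0 : ℝ),
      ENNReal.ofReal (e ^ (2 * n) * (1 - Real.cos (2 * Real.pi * e)) * ‖fAux n e‖ ^ 2) < ⊤) :=
  ⟨setLIntegral_Ioi_zero_ofReal_lt_top (fun _ he => norm_fAux_sq_le_one n he.1.le)
      fun _ he => norm_fAux_sq_le_one_div_sq hn (le_of_lt he),
    setLIntegral_Ioi_zero_pow_mul_norm_fAux_sq_eq_top n,
    setLIntegral_Ioi_zero_ofReal_lt_top
      (fun _ he => pow_mul_one_sub_cos_mul_norm_fAux_sq_le_two n (Ioc_subset_Icc_self he))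
      fun _ he => pow_mul_one_sub_cos_mul_norm_fAux_sq_le n (le_of_lt he)⟩
end
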